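/- arXiv:0909.0993 — 3 statements merged into one kernel-verified Lean document; each statement's English description precedes it below -/
import Mathlib

section
/- Let M be a negative definite real symmetric r×r matrix with M_{ij} ≥ 0 for i ≠ j. If v ∈ ℝ^r is a vector such that (Mv)_j > 0 for every index j with v_j ≥ 0 (and with v_j > 0 for at least one such j if any exist), then v has no non-negative entries; equivalently the positive part v_+ of v is zero. -/
/-! Write `v = v⁺ - v⁻`. If `v⁺ ≠ 0`, negative definiteness gives `v⁺ ⬝ M v⁺ < 0`, yet
`v⁺ ⬝ M v⁺ = v⁺ ⬝ M v + v⁺ ⬝ M v⁻` is a sum of two non-negative terms: the first because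
`M v ≥ 0` wherever `v > 0`, the second because `v⁺` and `v⁻` have disjoint supports and only
the non-negative off-diagonal entries of `M` pair them. Hence `v ≤ 0`, and an index with
`v j = 0` would give `(M v) j = ∑_{i ≠ j} M j i v i ≤ 0`. -/

open Matrix

variable {n R : Type*} [Fintype n] [CommRing R] [LinearOrder R] [IsStrictOrderedRing R]
  {M : Matrix n n R}

theorem dotProduct_mulVec_nonneg_of_disjoint (hM : ∀ i j, i ≠ j → 0 ≤ M i j) {x y : n → R}
    (hx : 0 ≤ x) (hy : 0 ≤ y) (hxy : ∀ i, x i = 0 ∨ y i = 0) : 0 ≤ x ⬝ᵥ M *ᵥ y := by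
  refine Finset.sum_nonneg fun i _ => ?_
  rcases hxy i with hxi | hyi
  · simp [hxi]
  · refine mul_nonneg (hx i) (Finset.sum_nonneg fun j _ => ?_)
    obtain rfl | hij := eq_or_ne i j
    · simp [hyi]
    · exact mul_nonneg (hM i j hij) (hy j)

theorem dotProduct_posPart_mulVec_nonneg {v : n → R} (hv : ∀ j, 0 < v j → 0 ≤ (M *ᵥ v) j) :
    0 ≤ v⁺ ⬝ᵥ M *ᵥ v := by
  refine Finset.sum_nonneg fun i _ => ?_
  rcases le_or_gt (v i) 0 with hvi | hvi
  · simp [posPart_eq_zero.mpr hvi]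
  · exact mul_nonneg (posPart_nonneg _) (hv i hvi)

theorem posPart_eq_zero_of_negDef (hneg : ∀ x : n → R, x ≠ 0 → x ⬝ᵥ M *ᵥ x < 0)
    (hM : ∀ i j, i ≠ j → 0 ≤ M i j) {v : n → R} (hv : ∀ j, 0 < v j → 0 ≤ (M *ᵥ v) j) :
    v⁺ = 0 := by
  by_contra hpos
  have hdecomp : v⁺ = v + v⁻ := sub_eq_iff_eq_add.mp (posPart_sub_negPart v)
  have hsplit : v⁺ ⬝ᵥ M *ᵥ v⁺ = v⁺ ⬝ᵥ M *ᵥ v + v⁺ ⬝ᵥ M *ᵥ v⁻ := by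
    rw [← dotProduct_add, ← mulVec_add, ← hdecomp]
  have hdisjoint : ∀ i, v⁺ i = 0 ∨ v⁻ i = 0 := fun i =>
    (le_total (v i) 0).imp posPart_eq_zero.mpr negPart_eq_zero.mpr
  have hcross := dotProduct_mulVec_nonneg_of_disjoint hM (posPart_nonneg v) (negPart_nonneg v)
    hdisjoint
  linarith [hneg _ hpos, dotProduct_posPart_mulVec_nonneg hv]

theorem mulVec_apply_nonpos_of_nonpos (hM : ∀ i j, i ≠ j → 0 ≤ M i j) {v : n → R}
    (hv : v ≤ 0) {j : n} (hj : v j = 0) : (M *ᵥ v) j ≤ 0 := by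
  refine Finset.sum_nonpos fun i _ => ?_
  obtain rfl | hji := eq_or_ne j i
  · simp [hj]
  · exact mul_nonpos_of_nonneg_of_nonpos (hM j i hji) (hv i)

theorem negdef_matrix_positive_part_vanishes_general
    {r : ℕ} (M : Matrix (Fin r) (Fin r) ℝ)
    (hnegdef : ∀ x : Fin r → ℝ, x ≠ 0 → dotProduct x (M.mulVec x) < 0)
    (hoffdiag : ∀ i j : Fin r, i ≠ j → 0 ≤ M i j)
    (v : Fin r → ℝ)
    (hv : ∀ j : Fin r, 0 ≤ v j → 0 < (M.mulVec v) j) :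
    ∀ j : Fin r, v j < 0 := by
  have hnonpos : v ≤ 0 :=
    posPart_eq_zero.mp (posPart_eq_zero_of_negDef hnegdef hoffdiag fun j hj => (hv j hj.le).le)
  intro j
  by_contra! hj
  have hvj : v j = 0 := le_antisymm (hnonpos j) hj
  exact (hv j hj).not_ge (mulVec_apply_nonpos_of_nonpos hoffdiag hnonpos hvj)

/-- Let `M` be a negative definite real symmetric `r × r` matrix with
`M i j ≥ 0` for `i ≠ j`.  If `v : ℝ^r` is a vector such that `(M *ᵥ v) j > 0` for every
index `j` with `v j ≥ 0`, then `v` has no non-negative entries (equivalently, the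
positive part `v₊` of `v` is zero). -/
theorem negdef_matrix_positive_part_vanishes
    {r : ℕ} (M : Matrix (Fin r) (Fin r) ℝ)
    (hsymm : M.IsSymm)
    (hnegdef : ∀ x : Fin r → ℝ, x ≠ 0 → dotProduct x (M.mulVec x) < 0)
    (hoffdiag : ∀ i j : Fin r, i ≠ j → 0 ≤ M i j)
    (v : Fin r → ℝ)
    (hv : ∀ j : Fin r, 0 ≤ v j → 0 < (M.mulVec v) j) :
    ∀ j : Fin r, v j < 0 :=
  negdef_matrix_positive_part_vanishes_general M hnegdef hoffdiag v hv
end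

section
/- Let R be a reduced excellent ring. If every subintegral extension R ↪ S contained in the integral closure of R in its total ring of fractions is an isomorphism, then every subintegral finite extension R ↪ S (S reduced) is an isomorphism. -/
/-!
A subintegral `f : R → S` is integral and `Spec S → Spec R` is a bijection, hence (going up) an
order isomorphism; so `f` matches the minimal primes of `S` with those of `R`. If `q` is a minimal
prime of the reduced ring `S`, then `S_q` is a field, and the isomorphism of residue fields makes
`R_p → S_q` surjective. Consequently, for `s : S` the ideal `{u | u • s ∈ R}` lies in no minimal
prime of `R`, and since `R` is reduced and Noetherian it contains a non-zero-divisor. As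
non-zero-divisors of `R` stay non-zero-divisors in `S`, localizing `S` at them gives the total ring
of fractions of `R`, so `S` is isomorphic over `R` to an integral subalgebra of it, to which the
hypothesis applies.
-/

universe u

/-- A finite extension of rings `f : R →+* S` is *subintegral* if it is injective,
finite, induces a bijection `Spec S → Spec R`, and induces isomorphisms of residue
fields at every prime. -/
def RingHom.IsSubintegral {R S : Type u} [CommRing R] [CommRing S]
    (f : R →+* S) : Prop :=
  Function.Injective f ∧ f.Finite ∧
  Function.Bijective (PrimeSpectrum.comap f) ∧
  ∀ q : PrimeSpectrum S,
    Function.Bijective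
      (letI := Localization.isLocalHom_localRingHom (q.asIdeal.comap f) q.asIdeal f rfl
       IsLocalRing.ResidueField.map
        (Localization.localRingHom (q.asIdeal.comap f) q.asIdeal f rfl))

open scoped nonZeroDivisors

theorem RingHom.IsSubintegral.ringEquiv_comp {R S S' : Type u} [CommRing R] [CommRing S]
    [CommRing S'] {f : R →+* S} (hf : f.IsSubintegral) (e : S ≃+* S') :
    ((e : S →+* S').comp f).IsSubintegral := by
  obtain ⟨hinj, hfin, hbij, hres⟩ := hf
  refine ⟨e.injective.comp hinj, (RingHom.Finite.of_surjective _ e.surjective).comp hfin, ?_,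
    fun q => ?_⟩
  · rw [PrimeSpectrum.comap_comp]
    exact hbij.comp (PrimeSpectrum.comapEquiv e.symm).bijective
  · set q₀ := q.asIdeal.comap (e : S →+* S')
    have hcomp := Localization.localRingHom_comp (q₀.comap f) q₀ q.asIdeal f rfl
      (e : S →+* S') rfl
    have := Localization.isLocalHom_localRingHom (q₀.comap f) q₀ f rfl
    have := Localization.isLocalHom_localRingHom q₀ q.asIdeal (e : S →+* S') rfl
    -- `hcomp` cannot be rewritten under `ResidueField.map`, whose `IsLocalHom` argument depends
    -- on the map, so the composite is compared on residues instead.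
    have hmap : IsLocalRing.ResidueField.map (Localization.localRingHom
        (q.asIdeal.comap ((e : S →+* S').comp f)) q.asIdeal ((e : S →+* S').comp f) rfl) =
        (IsLocalRing.ResidueField.map (Localization.localRingHom q₀ q.asIdeal e rfl)).comp
          (IsLocalRing.ResidueField.map (Localization.localRingHom (q₀.comap f) q₀ f rfl)) :=
      Ideal.Quotient.ringHom_ext (RingHom.ext fun x =>
        congrArg (IsLocalRing.residue _) (RingHom.congr_fun hcomp x))
    rw [hmap]
    exact (IsLocalRing.ResidueField.mapEquiv
      (Localization.localRingEquiv q₀ q.asIdeal e rfl)).bijective.comp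
      (hres (PrimeSpectrum.comap (e : S →+* S') q))

section Reduced

variable {A : Type*} [CommRing A] [IsReduced A]

theorem exists_mem_minimalPrimes_notMem {x : A} (hx : x ≠ 0) :
    ∃ P ∈ minimalPrimes A, x ∉ P := by
  have : x ∉ sInf (minimalPrimes A) := by
    rwa [minimalPrimes, Ideal.sInf_minimalPrimes, ← Ideal.zero_eq_bot, ← nilradical,
      nilradical_eq_zero, Ideal.zero_eq_bot, Ideal.mem_bot]
  simpa only [Submodule.mem_sInf, not_forall, exists_prop] using this

theorem Ideal.exists_minimalPrimes_le_of_disjoint_nonZeroDivisors [IsNoetherianRing A]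
    {I : Ideal A} (h : Disjoint (I : Set A) A⁰) : ∃ P ∈ minimalPrimes A, I ≤ P := by
  obtain ⟨x, hxI, hx⟩ :=
    SetLike.exists_of_lt (Ideal.bot_lt_annihilator_of_disjoint_nonZeroDivisors h)
  obtain ⟨P, hP, hxP⟩ := exists_mem_minimalPrimes_notMem (by simpa using hx)
  refine ⟨P, hP, fun i hi => (hP.1.1.mem_or_mem ?_).resolve_left hxP⟩
  have hxi : x * i = 0 := congrArg Subtype.val (Module.mem_annihilator.mp hxI ⟨i, hi⟩)
  exact hxi ▸ P.zero_mem

theorem Localization.AtPrime.maximalIdeal_eq_bot_of_mem_minimalPrimes {P : Ideal A} [P.IsPrime]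
    (hP : P ∈ minimalPrimes A) :
    IsLocalRing.maximalIdeal (Localization.AtPrime P) = ⊥ := by
  have := Ring.KrullDimLE.of_isLocalization P hP (Localization.AtPrime P)
  refine le_bot_iff.mp fun x hx => ?_
  exact (Ring.KrullDimLE.isNilpotent_iff_mem_maximalIdeal.mpr hx).eq_zero

end Reduced

theorem IsLocalRing.surjective_of_residueField_map_surjective {A B : Type*} [CommRing A]
    [CommRing B] [IsLocalRing A] [IsLocalRing B] (φ : A →+* B) [IsLocalHom φ]
    (hB : IsLocalRing.maximalIdeal B = ⊥)
    (h : Function.Surjective (IsLocalRing.ResidueField.map φ)) : Function.Surjective φ := by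
  intro y
  obtain ⟨t, ht⟩ := h (IsLocalRing.residue B y)
  obtain ⟨x, rfl⟩ := IsLocalRing.residue_surjective t
  rw [IsLocalRing.ResidueField.map_residue, ← sub_eq_zero, ← map_sub,
    IsLocalRing.residue_eq_zero_iff, hB, Ideal.mem_bot, sub_eq_zero] at ht
  exact ⟨x, ht⟩

section Spectrum

variable {R S : Type*} [CommRing R] [CommRing S] [Algebra R S]

theorem Ideal.primesOver_comap_eq_singleton
    (h : Function.Injective (PrimeSpectrum.comap (algebraMap R S))) (q : Ideal S) [q.IsPrime] :
    (q.comap (algebraMap R S)).primesOver S = {q} := by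
  ext Q
  refine ⟨fun ⟨hQ, hQq⟩ => ?_, by rintro rfl; exact ⟨‹_›, ⟨rfl⟩⟩⟩
  have : (⟨Q, hQ⟩ : PrimeSpectrum S) = ⟨q, ‹_›⟩ := h (PrimeSpectrum.ext hQq.over.symm)
  exact congrArg PrimeSpectrum.asIdeal this

variable [Algebra.IsIntegral R S]

theorem PrimeSpectrum.comap_le_comap_iff_of_isIntegral
    (h : Function.Injective (PrimeSpectrum.comap (algebraMap R S))) {q₁ q₂ : PrimeSpectrum S} :
    comap (algebraMap R S) q₁ ≤ comap (algebraMap R S) q₂ ↔ q₁ ≤ q₂ := by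
  refine ⟨fun hle => ?_, fun hle => Ideal.comap_mono hle⟩
  obtain ⟨Q, hq₁Q, hQ, hQq₂⟩ :=
    Ideal.exists_ideal_over_prime_of_isIntegral (comap (algebraMap R S) q₂).asIdeal q₁.asIdeal hle
  have : (⟨Q, hQ⟩ : PrimeSpectrum S) = q₂ := h (PrimeSpectrum.ext hQq₂)
  exact this ▸ hq₁Q

theorem PrimeSpectrum.isMin_comap_iff_of_isIntegral
    (h : Function.Bijective (PrimeSpectrum.comap (algebraMap R S))) {q : PrimeSpectrum S} :
    IsMin (comap (algebraMap R S) q) ↔ IsMin q :=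
  OrderIso.isMin_apply
    { Equiv.ofBijective _ h with map_rel_iff' := comap_le_comap_iff_of_isIntegral h.1 }

theorem algebraMapSubmonoid_nonZeroDivisors_le [IsReduced S]
    (h : Function.Bijective (PrimeSpectrum.comap (algebraMap R S))) :
    Algebra.algebraMapSubmonoid S R⁰ ≤ S⁰ := by
  rintro _ ⟨u, hu, rfl⟩
  refine mem_nonZeroDivisors_iff_right.mpr fun x hx => by_contra fun hx0 => ?_
  obtain ⟨q, hq, hxq⟩ := exists_mem_minimalPrimes_notMem hx0
  have hmin : IsMin (PrimeSpectrum.comap (algebraMap R S) ⟨q, hq.1.1⟩) :=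
    (PrimeSpectrum.isMin_comap_iff_of_isIntegral h).mpr (PrimeSpectrum.isMin_iff.mpr hq)
  refine notMem_nonZeroDivisors_of_mem_mem_minimalPrimes ?_ (PrimeSpectrum.isMin_iff.mp hmin) hu
  exact (hq.1.1.mem_or_mem (hx ▸ q.zero_mem)).resolve_left hxq

end Spectrum

section Subintegral

variable {R S : Type*} [CommRing R] [CommRing S] [Algebra R S] [Algebra.IsIntegral R S]

theorem exists_notMem_algebraMap_mul_eq_algebraMap (q : Ideal S) [q.IsPrime]
    (hq : (q.comap (algebraMap R S)).primesOver S = {q})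
    (hsurj : Function.Surjective
      (Localization.localRingHom (q.comap (algebraMap R S)) q (algebraMap R S) rfl)) (s : S) :
    ∃ u ∉ q.comap (algebraMap R S), ∃ r, algebraMap R S u * s = algebraMap R S r := by
  obtain ⟨x, hx⟩ := hsurj (algebraMap S _ s)
  obtain ⟨⟨r, u⟩, rfl⟩ := IsLocalization.mk'_surjective (q.comap (algebraMap R S)).primeCompl x
  rw [Localization.localRingHom_mk', IsLocalization.mk'_eq_iff_eq_mul, ← map_mul,
    IsLocalization.eq_iff_exists q.primeCompl] at hx
  obtain ⟨⟨c, hc⟩, hcz⟩ := hx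
  obtain ⟨r', hr', t, ht⟩ := Ideal.exists_notMem_dvd_algebraMap_of_primesOver_eq_singleton hq c hc
  refine ⟨r' * u, (Ideal.primeCompl _).mul_mem hr' u.2, r' * r, ?_⟩
  simp only [map_mul] at hcz ⊢
  linear_combination (algebraMap R S u * s - algebraMap R S r) * ht - t * hcz

theorem exists_nonZeroDivisor_algebraMap_mul_eq_algebraMap [IsNoetherianRing R] [IsReduced R]
    [IsReduced S] (h : Function.Bijective (PrimeSpectrum.comap (algebraMap R S)))
    (hres : ∀ q : PrimeSpectrum S, Function.Surjective (IsLocalRing.ResidueField.map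
      (Localization.localRingHom (q.asIdeal.comap (algebraMap R S)) q.asIdeal (algebraMap R S)
        rfl)))
    (s : S) : ∃ u ∈ R⁰, ∃ r, algebraMap R S u * s = algebraMap R S r := by
  let I : Ideal R := (1 : Submodule R S).colon {s}
  have mem_I {u : R} : u ∈ I ↔ ∃ r, algebraMap R S r = u • s := by
    simp [I, Submodule.mem_colon, Submodule.mem_one]
  suffices ¬Disjoint (I : Set R) R⁰ by
    obtain ⟨u, huI, hu⟩ := Set.not_disjoint_iff.mp this
    obtain ⟨r, hr⟩ := mem_I.mp huI
    exact ⟨u, hu, r, by rw [hr, Algebra.smul_def]⟩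
  intro hdisj
  obtain ⟨p, hp, hIp⟩ := Ideal.exists_minimalPrimes_le_of_disjoint_nonZeroDivisors hdisj
  obtain ⟨q, hqp⟩ := h.2 ⟨p, hp.1.1⟩
  obtain rfl : q.asIdeal.comap (algebraMap R S) = p := congrArg PrimeSpectrum.asIdeal hqp
  have hq : q.asIdeal ∈ minimalPrimes S := PrimeSpectrum.isMin_iff.mp
    ((PrimeSpectrum.isMin_comap_iff_of_isIntegral h).mp (PrimeSpectrum.isMin_iff.mpr hp))
  have hsurj := IsLocalRing.surjective_of_residueField_map_surjective _
    (Localization.AtPrime.maximalIdeal_eq_bot_of_mem_minimalPrimes hq) (hres q)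
  obtain ⟨u, hu, r, hr⟩ := exists_notMem_algebraMap_mul_eq_algebraMap q.asIdeal
    (Ideal.primesOver_comap_eq_singleton h.1 q.asIdeal) hsurj s
  exact hu (hIp (mem_I.mpr ⟨r, by rw [← hr, Algebra.smul_def]⟩))

end Subintegral

section FractionRing

variable {R S : Type*} [CommRing R] [CommRing S] [Algebra R S]
  (hinj : Function.Injective (algebraMap R S)) (hM : Algebra.algebraMapSubmonoid S R⁰ ≤ S⁰)
  (hS : ∀ s : S, ∃ u ∈ R⁰, ∃ r, algebraMap R S u * s = algebraMap R S r)
include hinj hM hS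

theorem isLocalization_nonZeroDivisors_localization_algebraMapSubmonoid :
    IsLocalization R⁰ (Localization (Algebra.algebraMapSubmonoid S R⁰)) where
  map_units u := by
    rw [IsScalarTower.algebraMap_apply R S]
    exact IsLocalization.map_units _ (⟨_, u, u.2, rfl⟩ : Algebra.algebraMapSubmonoid S R⁰)
  surj z := by
    obtain ⟨⟨s, m⟩, rfl⟩ := IsLocalization.mk'_surjective (Algebra.algebraMapSubmonoid S R⁰) z
    obtain ⟨u, hu, hum⟩ := m.2
    obtain ⟨v, hv, r, hr⟩ := hS s
    refine ⟨⟨r, ⟨v * u, mul_mem hv hu⟩⟩, ?_⟩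
    simp only [IsScalarTower.algebraMap_apply R S (Localization _), map_mul, hum, ← hr]
    rw [mul_left_comm, IsLocalization.mk'_spec, mul_comm]
  exists_of_eq {x y} h := by
    rw [IsScalarTower.algebraMap_apply R S, IsScalarTower.algebraMap_apply R S] at h
    exact ⟨1, congrArg _ (hinj (IsLocalization.injective _ hM h))⟩

theorem exists_injective_algHom_fractionRing :
    ∃ ι : S →ₐ[R] FractionRing R, Function.Injective ι := by
  let L := Localization (Algebra.algebraMapSubmonoid S R⁰)
  have := isLocalization_nonZeroDivisors_localization_algebraMapSubmonoid hinj hM hS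
  let e := IsLocalization.algEquiv R⁰ L (FractionRing R)
  exact ⟨e.toAlgHom.comp (IsScalarTower.toAlgHom R S L),
    e.injective.comp (IsLocalization.injective L hM)⟩

end FractionRing

/-- Let `R` be a reduced excellent (here: reduced Noetherian) ring.  If
every subintegral extension `R ↪ S` contained in the integral closure of `R` in its
total ring of fractions is an isomorphism, then every subintegral finite extension
`R ↪ S` with `S` reduced is an isomorphism.  (This is the equivalence of the
Greco–Traverso and Swan definitions of seminormality.) -/
theorem seminormal_of_seminormal_inside_integral_closure
    (R : Type u) [CommRing R] [IsReduced R] [IsNoetherianRing R]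
    -- every subintegral extension of R inside the integral closure of R in its total
    -- ring of fractions is an isomorphism:
    (hGT : ∀ S : Subalgebra R (FractionRing R),
      (∀ x ∈ S, IsIntegral R x) →
      (algebraMap R ↥S).IsSubintegral → Function.Bijective (algebraMap R ↥S)) :
    -- then every subintegral finite extension of R by a reduced ring is an isomorphism:
    ∀ (S : Type u) [CommRing S] [IsReduced S] (f : R →+* S),
      f.IsSubintegral → Function.Bijective f := by
  intro S _ _ f hf
  let := f.toAlgebra
  obtain ⟨hinj, hfin, hbij, hres⟩ := id hf
  have : Module.Finite R S := hfin
  obtain ⟨ι, hι⟩ := exists_injective_algHom_fractionRing hinj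
    (algebraMapSubmonoid_nonZeroDivisors_le hbij)
    (exists_nonZeroDivisor_algebraMap_mul_eq_algebraMap hbij fun q => (hres q).2)
  let e : S ≃ₐ[R] ι.range := AlgEquiv.ofInjective ι hι
  have he : algebraMap R ι.range = (e.toRingEquiv : S →+* ι.range).comp f :=
    RingHom.ext fun r => (e.commutes r).symm
  have hbij' := hGT ι.range
    (fun _ ⟨s, hs⟩ => hs ▸ (Algebra.IsIntegral.isIntegral s).map ι)
    (he ▸ hf.ringEquiv_comp e.toRingEquiv)
  rw [he, RingHom.coe_comp] at hbij'
  exact (Function.Bijective.of_comp_iff' e.bijective _).mp hbij'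
end

section
/- Let (R, m) be an F-finite local ring of characteristic p > 0 such that R is F-injective and the punctured spectrum Spec R ∖ {m} is Cohen–Macaulay. Then m · H^i_m(R) = 0 for all i < dim R, i.e., R is quasi-Buchsbaum. -/
/-! An injective `p`-linear map `F` satisfies `F^[e] (c • z) = c ^ p ^ e • F^[e] z`. If `c ^ n`
kills the module and `n ≤ p ^ e`, the right-hand side vanishes, so injectivity of `F^[e]` forces
`c • z = 0`. For `c ∈ m`, the power `c ^ n` lies in `m ^ n`, which kills `H^i_m(R)` for `i < dim R`
once `n` is large. -/

section PLinear

variable {R M : Type*} {p : ℕ} {F : M → M}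

theorem iterate_map_smul_of_map_smul [Monoid R] [MulAction R M]
    (hF : ∀ (r : R) (x : M), F (r • x) = r ^ p • F x) (e : ℕ) (r : R) (x : M) :
    F^[e] (r • x) = r ^ p ^ e • F^[e] x := by
  induction e with
  | zero => simp
  | succ e ih =>
    rw [Function.iterate_succ_apply', Function.iterate_succ_apply', ih, hF, ← pow_mul, ← pow_succ]

theorem smul_eq_zero_of_pow_smul_eq_zero_of_injective [MonoidWithZero R] [Zero M]
    [MulActionWithZero R M] (hp : 1 < p) (hF : ∀ (r : R) (x : M), F (r • x) = r ^ p • F x)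
    (hinj : Function.Injective F) {c : R} {n : ℕ} (hc : ∀ y : M, c ^ n • y = 0) (x : M) :
    c • x = 0 := by
  obtain ⟨e, he⟩ := pow_unbounded_of_one_lt n hp
  have hFe := iterate_map_smul_of_map_smul hF e
  apply hinj.iterate e
  calc F^[e] (c • x) = c ^ p ^ e • F^[e] x := hFe c x
    _ = c ^ (p ^ e - n) • c ^ n • F^[e] x := by
      rw [smul_smul, ← pow_add, Nat.sub_add_cancel he.le]
    _ = (0 : R) ^ p ^ e • F^[e] 0 := by
      rw [hc, smul_zero, zero_pow (by positivity), zero_smul]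
    _ = F^[e] ((0 : R) • (0 : M)) := (hFe 0 0).symm
    _ = F^[e] 0 := by rw [zero_smul]

end PLinear

theorem Finjective_isolated_nonCM_is_quasiBuchsbaum_general
    (R : Type*) [CommRing R] [IsLocalRing R]
    (p : ℕ) (hp : Fact p.Prime)
    (H : ℕ → Type*)                                     -- H i = H^i_m(R)
    [∀ i, AddCommGroup (H i)] [∀ i, Module R (H i)]
    (Frob : ∀ i, H i → H i)                             -- Frobenius action on H^i_m(R)
    (hplin : ∀ i (r : R) (x : H i), Frob i (r • x) = (r ^ p) • Frob i x)
    (hFinj : ∀ i, Function.Injective (Frob i))          -- R is F-injective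
    -- the punctured spectrum is Cohen–Macaulay, hence H^i_m(R) is killed by a power of m
    -- for i < dim R:
    (hCM : ∀ i : ℕ, (i : WithBot (WithTop ℕ)) < ringKrullDim R →
      ∃ n : ℕ, ∀ c ∈ (IsLocalRing.maximalIdeal R) ^ n, ∀ x : H i, c • x = 0) :
    ∀ i : ℕ, (i : WithBot (WithTop ℕ)) < ringKrullDim R →
      ∀ c ∈ IsLocalRing.maximalIdeal R, ∀ x : H i, c • x = 0 := by
  intro i hi c hc
  obtain ⟨n, hn⟩ := hCM i hi
  exact smul_eq_zero_of_pow_smul_eq_zero_of_injective hp.out.one_lt (hplin i) (hFinj i)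
    (hn _ (Ideal.pow_mem_pow hc n))

/-- Let `(R, m)` be an `F`-finite Noetherian local ring of prime
characteristic `p > 0` which is `F`-injective, and whose punctured spectrum
`Spec R ∖ {m}` is Cohen–Macaulay.  Then `m · H^i_m(R) = 0` for all `i < dim R`;
that is, `R` is quasi-Buchsbaum.

Since the Frobenius action on local cohomology is not available in Mathlib, the local
cohomology modules `H i = H^i_m(R)` are abstracted as `R`-modules equipped with their
natural (additive, `p`-linear) Frobenius actions `Frob i`, injective for all `i` by
`F`-injectivity of `R`.  Cohen–Macaulayness of the punctured spectrum enters through its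
standard consequence: each `H^i_m(R)` with `i < dim R` is annihilated by some power
of `m`. -/
theorem Finjective_isolated_nonCM_is_quasiBuchsbaum
    (R : Type*) [CommRing R] [IsLocalRing R] [IsNoetherianRing R]
    (p : ℕ) (hp : Fact p.Prime) [CharP R p]
    (hFfinite : (frobenius R p).Finite)                 -- R is F-finite
    (H : ℕ → Type*)                                     -- H i = H^i_m(R)
    [∀ i, AddCommGroup (H i)] [∀ i, Module R (H i)]
    (Frob : ∀ i, H i → H i)                             -- Frobenius action on H^i_m(R)
    (hadd : ∀ i (x y : H i), Frob i (x + y) = Frob i x + Frob i y)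
    (hplin : ∀ i (r : R) (x : H i), Frob i (r • x) = (r ^ p) • Frob i x)
    (hFinj : ∀ i, Function.Injective (Frob i))          -- R is F-injective
    -- the punctured spectrum is Cohen–Macaulay, hence H^i_m(R) is killed by a power of m
    -- for i < dim R:
    (hCM : ∀ i : ℕ, (i : WithBot (WithTop ℕ)) < ringKrullDim R →
      ∃ n : ℕ, ∀ c ∈ (IsLocalRing.maximalIdeal R) ^ n, ∀ x : H i, c • x = 0) :
    ∀ i : ℕ, (i : WithBot (WithTop ℕ)) < ringKrullDim R →
      ∀ c ∈ IsLocalRing.maximalIdeal R, ∀ x : H i, c • x = 0 :=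
  Finjective_isolated_nonCM_is_quasiBuchsbaum_general R p hp H Frob hplin hFinj hCM
end
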